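/- arXiv:2005.11947 — 4 statements merged into one kernel-verified Lean document; each statement's English description precedes it below -/
import Mathlib

section
/- For any β > 0, there exist β' with 0 < β' < β and a natural number N such that for every closed ball B = B(x, ρ) ⊆ ℝ^d there is a finite collection 𝓗_B of at most N affine hyperplanes with the following property: for any affine hyperplane H' there exists H ∈ 𝓗_B such that B(x,ρ) ∩ B(H', β'ρ) ⊆ B(H, βρ). -/
open Metric

/-- An affine hyperplane in `ℝ^d`, as a set. -/
def IsHyperplane {d : ℕ} (H : Set (EuclideanSpace ℝ (Fin d))) : Prop :=
  ∃ (u : EuclideanSpace ℝ (Fin d)) (c : ℝ), u ≠ 0 ∧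
    H = {y : EuclideanSpace ℝ (Fin d) | (inner ℝ u y : ℝ) = c}

local notation "⟪" x ", " y "⟫" => @inner ℝ _ _ x y

/-- for any `β > 0` there are `0 < β' < β` and `N` such that for any
ball `B(x,ρ)` there is a collection of at most `N` hyperplanes `𝓗` such that any
hyperplane neighborhood `B(H', β'ρ)` intersected with the ball is contained in
`B(H, βρ)` for some `H ∈ 𝓗`. -/
theorem finitely_many_hyperplanes_absorb (d : ℕ) (β : ℝ) (hβ : 0 < β) :
    ∃ β' : ℝ, 0 < β' ∧ β' < β ∧ ∃ N : ℕ,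
      ∀ (x : EuclideanSpace ℝ (Fin d)) (ρ : ℝ), 0 < ρ →
        ∃ (m : ℕ) (Hs : Fin m → Set (EuclideanSpace ℝ (Fin d))),
          m ≤ N ∧ (∀ i, IsHyperplane (Hs i)) ∧
          ∀ H' : Set (EuclideanSpace ℝ (Fin d)), IsHyperplane H' →
            ∃ i, closedBall x ρ ∩ cthickening (β' * ρ) H' ⊆ cthickening (β * ρ) (Hs i) := by
  classical
  refine ⟨β / 2, by positivity, by linarith, ?_⟩
  have hε : (0 : ℝ) < β / 8 := by positivity
  obtain ⟨t, hts, htfin, htcov⟩ :=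
    ((isCompact_sphere (0 : EuclideanSpace ℝ (Fin d)) 1).totallyBounded).exists_subset
      (dist_mem_uniformity hε)
  set K : ℕ := ⌈(1 + β / 2) / (β / 4)⌉₊ + 1 with hK
  set s := htfin.toFinset with hs
  refine ⟨s.card * (2 * K + 1), ?_⟩
  intro x ρ hρ
  set ι := (↥s × Fin (2 * K + 1)) with hι
  set e : ι ≃ Fin (Fintype.card ι) := Fintype.equivFin ι with he
  set off : Fin (2 * K + 1) → ℝ := fun j => ((j : ℝ) - K) * (β / 4) * ρ with hoff
  set F : ι → Set (EuclideanSpace ℝ (Fin d)) := fun p =>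
    {y : EuclideanSpace ℝ (Fin d) |
      ⟪(p.1 : EuclideanSpace ℝ (Fin d)), y⟫ = ⟪(p.1 : EuclideanSpace ℝ (Fin d)), x⟫ + off p.2}
    with hF
  have hsph : ∀ w : EuclideanSpace ℝ (Fin d), w ∈ s → ‖w‖ = 1 := by
    intro w hw
    have : w ∈ sphere (0 : EuclideanSpace ℝ (Fin d)) 1 := hts (htfin.mem_toFinset.mp hw)
    simpa using this
  refine ⟨Fintype.card ι, fun i => F (e.symm i), ?_, ?_, ?_⟩
  · have : Fintype.card ι = s.card * (2 * K + 1) := by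
      show Fintype.card (↥s × Fin (2 * K + 1)) = s.card * (2 * K + 1)
      rw [Fintype.card_prod, Fintype.card_coe, Fintype.card_fin]
    omega
  · intro i
    refine ⟨((e.symm i).1 : EuclideanSpace ℝ (Fin d)), _, ?_, rfl⟩
    have h1 := hsph _ (e.symm i).1.2
    intro h0
    rw [h0] at h1; simp at h1
  · rintro H' ⟨u', c, hu', rfl⟩
    -- normalize
    set v : EuclideanSpace ℝ (Fin d) := ‖u'‖⁻¹ • u' with hv
    have hu'norm : (0 : ℝ) < ‖u'‖ := norm_pos_iff.mpr hu'
    have hvnorm : ‖v‖ = 1 := by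
      rw [hv, norm_smul, norm_inv, norm_norm, inv_mul_cancel₀ hu'norm.ne']
    set c₀ : ℝ := c / ‖u'‖ with hc₀
    have hmemH' : ∀ y, (y ∈ {y : EuclideanSpace ℝ (Fin d) | (inner ℝ u' y : ℝ) = c}) ↔ ⟪v, y⟫ = c₀ := by
      intro y
      simp only [Set.mem_setOf_eq, hv, hc₀, real_inner_smul_left]
      constructor
      · intro h; rw [h]; ring
      · intro h
        field_simp at h
        exact h
    have hne : ({y : EuclideanSpace ℝ (Fin d) | (inner ℝ u' y : ℝ) = c}).Nonempty := by
      refine ⟨c₀ • v, (hmemH' (c₀ • v)).mpr ?_⟩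
      rw [real_inner_smul_right, real_inner_self_eq_norm_sq, hvnorm]
      ring
    -- key estimate for points in the thickening
    have key : ∀ y ∈ cthickening (β / 2 * ρ) {y : EuclideanSpace ℝ (Fin d) | (inner ℝ u' y : ℝ) = c},
        |⟪v, y⟫ - c₀| ≤ β / 2 * ρ := by
      intro y hy
      have hd : infDist y {y : EuclideanSpace ℝ (Fin d) | (inner ℝ u' y : ℝ) = c} ≤ β / 2 * ρ := by
        have h1 := mem_cthickening_iff.mp hy
        have h2 : infDist y {y : EuclideanSpace ℝ (Fin d) | (inner ℝ u' y : ℝ) = c}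
            ≤ (ENNReal.ofReal (β / 2 * ρ)).toReal :=
          ENNReal.toReal_mono ENNReal.ofReal_ne_top h1
        rwa [ENNReal.toReal_ofReal (by positivity)] at h2
      by_contra hcon
      push_neg at hcon
      obtain ⟨z, hz, hdz⟩ := (infDist_lt_iff hne).mp (lt_of_le_of_lt hd hcon)
      have hz' : ⟪v, z⟫ = c₀ := (hmemH' z).mp hz
      have hb : |⟪v, y⟫ - c₀| ≤ dist y z := by
        calc |⟪v, y⟫ - c₀| = |⟪v, y - z⟫| := by rw [inner_sub_right, hz']
        _ ≤ ‖v‖ * ‖y - z‖ := abs_real_inner_le_norm v (y - z)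
        _ = dist y z := by rw [hvnorm, one_mul, dist_eq_norm]
      linarith
    -- direction from the net
    obtain ⟨w, hwt, hvw⟩ := Set.mem_iUnion₂.mp
      (htcov (by simpa [mem_sphere_iff_norm] using hvnorm :
        v ∈ sphere (0 : EuclideanSpace ℝ (Fin d)) 1))
    have hws : w ∈ s := htfin.mem_toFinset.mpr hwt
    have hdvw : dist v w < β / 8 := hvw
    have hwnorm : ‖w‖ = 1 := hsph w hws
    by_cases hint : (closedBall x ρ ∩
        cthickening (β / 2 * ρ) {y : EuclideanSpace ℝ (Fin d) | (inner ℝ u' y : ℝ) = c}).Nonempty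
    · obtain ⟨y₀, hy₀b, hy₀t⟩ := hint
      set c' : ℝ := c₀ - ⟪v, x⟫ with hc'
      have hy₀x : ‖y₀ - x‖ ≤ ρ := by
        rw [← dist_eq_norm]; exact mem_closedBall.mp hy₀b
      have hiv : |⟪v, y₀ - x⟫| ≤ ρ := by
        calc |⟪v, y₀ - x⟫| ≤ ‖v‖ * ‖y₀ - x‖ := abs_real_inner_le_norm v (y₀ - x)
        _ ≤ ρ := by rw [hvnorm, one_mul]; exact hy₀x
      have hc'bd : |c'| ≤ (1 + β / 2) * ρ := by
        have h1 := key y₀ hy₀t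
        have h2 : c' = -(⟪v, y₀⟫ - c₀) + ⟪v, y₀ - x⟫ := by
          rw [inner_sub_right]; ring
        rw [h2]
        calc |-(⟪v, y₀⟫ - c₀) + ⟪v, y₀ - x⟫| ≤ |-(⟪v, y₀⟫ - c₀)| + |⟪v, y₀ - x⟫| :=
          abs_add_le _ _
        _ = |⟪v, y₀⟫ - c₀| + |⟪v, y₀ - x⟫| := by rw [abs_neg]
        _ ≤ β / 2 * ρ + ρ := add_le_add h1 hiv
        _ = (1 + β / 2) * ρ := by ring
      -- offset index
      have hδρ : (0 : ℝ) < (β / 4) * ρ := by positivity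
      set r : ℤ := round (c' / ((β / 4) * ρ)) with hr
      have hrabs : |(r : ℝ)| ≤ (1 + β / 2) / (β / 4) + 1 / 2 := by
        have h1 : |(r : ℝ)| ≤ |c' / ((β / 4) * ρ)| + 1 / 2 := by
          have := abs_sub_round (c' / ((β / 4) * ρ))
          calc |(r : ℝ)| = |c' / ((β / 4) * ρ) - (c' / ((β / 4) * ρ) - r)| := by ring_nf
          _ ≤ |c' / ((β / 4) * ρ)| + |c' / ((β / 4) * ρ) - r| := abs_sub _ _
          _ ≤ |c' / ((β / 4) * ρ)| + 1 / 2 := by rw [hr]; linarith [abs_sub_round (c' / ((β / 4) * ρ))]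
        have h2 : |c' / ((β / 4) * ρ)| ≤ (1 + β / 2) / (β / 4) := by
          rw [abs_div, abs_of_pos hδρ, div_le_div_iff₀ hδρ (by positivity)]
          calc |c'| * (β / 4) ≤ ((1 + β / 2) * ρ) * (β / 4) :=
            mul_le_mul_of_nonneg_right hc'bd (by positivity)
          _ = (1 + β / 2) * ((β / 4) * ρ) := by ring
        linarith
      have hrK : |(r : ℝ)| ≤ K := by
        have h1 : (1 + β / 2) / (β / 4) ≤ (⌈(1 + β / 2) / (β / 4)⌉₊ : ℝ) :=
          Nat.le_ceil _
        have h2 : (K : ℝ) = (⌈(1 + β / 2) / (β / 4)⌉₊ : ℝ) + 1 := by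
          rw [hK]; push_cast; ring
        rw [h2]; linarith
      have hrK' : -(K : ℤ) ≤ r ∧ r ≤ (K : ℤ) := by
        have := abs_le.mp hrabs
        constructor
        · exact_mod_cast (by exact_mod_cast (abs_le.mp hrK).1 : -(K : ℝ) ≤ (r : ℝ))
        · exact_mod_cast (abs_le.mp hrK).2
      have hjlt : (r + K).toNat < 2 * K + 1 := by omega
      set j : Fin (2 * K + 1) := ⟨(r + K).toNat, hjlt⟩ with hj
      have hoffj : off j = (r : ℝ) * ((β / 4) * ρ) := by
        rw [hoff, hj]
        have h0 : ((r + (K : ℤ)).toNat : ℝ) = (r : ℝ) + K := by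
          have := Int.toNat_of_nonneg (by omega : (0 : ℤ) ≤ r + K)
          exact_mod_cast congrArg (Int.cast : ℤ → ℝ) this
        simp only [Fin.val_mk]
        rw [h0]; ring
      have hoffbd : |c' - off j| ≤ β / 8 * ρ := by
        rw [hoffj]
        have h1 : c' - (r : ℝ) * ((β / 4) * ρ) = (c' / ((β / 4) * ρ) - r) * ((β / 4) * ρ) := by
          field_simp
        rw [h1, abs_mul, abs_of_pos hδρ]
        calc |c' / ((β / 4) * ρ) - (r : ℝ)| * ((β / 4) * ρ)
            ≤ (1 / 2) * ((β / 4) * ρ) :=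
          mul_le_mul_of_nonneg_right (abs_sub_round _) hδρ.le
        _ = β / 8 * ρ := by ring
      -- the chosen hyperplane
      refine ⟨e ⟨⟨w, hws⟩, j⟩, ?_⟩
      intro y hy
      obtain ⟨hyb, hyt⟩ := hy
      have hyx : ‖y - x‖ ≤ ρ := by rw [← dist_eq_norm]; exact mem_closedBall.mp hyb
      set a : ℝ := ⟪w, y⟫ - ⟪w, x⟫ - off j with ha
      have hadecomp : a = (⟪v, y⟫ - c₀) + ⟪w - v, y - x⟫ + (c' - off j) := by
        rw [ha, hc']
        simp only [inner_sub_left, inner_sub_right]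
        ring
      have habd : |a| ≤ β * ρ := by
        have h1 := key y hyt
        have h2 : |⟪w - v, y - x⟫| ≤ β / 8 * ρ := by
          calc |⟪w - v, y - x⟫| ≤ ‖w - v‖ * ‖y - x‖ := abs_real_inner_le_norm _ _
          _ ≤ (β / 8) * ρ := by
            apply mul_le_mul _ hyx (norm_nonneg _) (by positivity)
            rw [← dist_eq_norm, dist_comm]
            exact hdvw.le
        have h3 : |a| ≤ |⟪v, y⟫ - c₀| + |⟪w - v, y - x⟫| + |c' - off j| := by
          rw [hadecomp]; exact abs_add_three _ _ _
        have hβρ : 0 < β * ρ := mul_pos hβ hρ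
        nlinarith
      simp only [Equiv.symm_apply_apply]
      refine mem_cthickening_of_dist_le y (y - a • w) (β * ρ) _ ?_ ?_
      · show ⟪w, y - a • w⟫ = ⟪w, x⟫ + off j
        rw [inner_sub_right, real_inner_smul_right, real_inner_self_eq_norm_sq, hwnorm, ha]
        ring
      · have : dist y (y - a • w) = |a| := by
          rw [dist_eq_norm]
          simp [norm_smul, hwnorm]
        rw [this]; exact habd
    · refine ⟨e ⟨⟨w, hws⟩, (⟨0, by omega⟩ : Fin (2 * K + 1))⟩, ?_⟩
      rw [Set.not_nonempty_iff_eq_empty] at hint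
      rw [hint]
      exact Set.empty_subset _
end

section
/- Let 0 < β < 1, r₀ > 0, and let (𝓑_n)_{n≥0} be nested collections of closed balls in ℝ^d with 𝓑₀ = {B₀}, every ball in 𝓑_n having radius β^n r₀, and such that each B ∈ 𝓑_n contains exactly N ≥ 2 pairwise disjoint balls of 𝓑_{n+1}, these being all the balls of 𝓑_{n+1} contained in B. Let μ_n be the average of the normalized Lebesgue restrictions to the balls of 𝓑_n, let μ be the weak limit of μ_n, and set α = -log N / log β. Then supp(μ) = K := ⋂_{n≥0} ⋃_{B∈𝓑_n} B and μ is α-Ahlfors regular. -/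
open MeasureTheory Metric Filter Topology
open scoped ENNReal NNReal

/-- The support of a measure on a metric space. -/
def measSupport {X : Type*} [MetricSpace X] [MeasurableSpace X] (μ : Measure X) : Set X :=
  {x : X | ∀ ε : ℝ, 0 < ε → 0 < μ (ball x ε)}

set_option maxHeartbeats 2000000 in
/-- the weak limit of the uniform measures on a tree-like nested family
of balls (each ball having exactly `N` disjoint children) is supported exactly on the
limit Cantor set and is `α`-Ahlfors regular with `α = -log N / log β`. -/
theorem treeLike_limit_measure_ahlfors (d : ℕ) (β r₀ : ℝ) (hβ0 : 0 < β) (hβ1 : β < 1)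
    (hr₀ : 0 < r₀) (N : ℕ) (hN : 2 ≤ N)
    (C : ℕ → Finset (EuclideanSpace ℝ (Fin d))) (x₀ : EuclideanSpace ℝ (Fin d))
    (hC0 : C 0 = {x₀})
    -- each ball of level n contains exactly N pairwise disjoint balls of level n+1,
    -- these being all the balls of level n+1 contained in it
    (hchild : ∀ n : ℕ, ∀ c ∈ C n, ∃ T : Finset (EuclideanSpace ℝ (Fin d)),
      T ⊆ C (n+1) ∧ T.card = N ∧
      (∀ c' ∈ T, closedBall c' (β ^ (n+1) * r₀) ⊆ closedBall c (β ^ n * r₀)) ∧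
      (∀ c' ∈ C (n+1), closedBall c' (β ^ (n+1) * r₀) ⊆ closedBall c (β ^ n * r₀) → c' ∈ T) ∧
      (T : Set (EuclideanSpace ℝ (Fin d))).Pairwise fun a b =>
        Disjoint (closedBall a (β ^ (n+1) * r₀)) (closedBall b (β ^ (n+1) * r₀)))
    -- nestedness: every ball of level n+1 lies in some ball of level n
    (hnested : ∀ n : ℕ, ∀ c' ∈ C (n+1), ∃ c ∈ C n,
      closedBall c' (β ^ (n+1) * r₀) ⊆ closedBall c (β ^ n * r₀))
    (μn : ℕ → Measure (EuclideanSpace ℝ (Fin d)))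
    (hμn : ∀ n : ℕ, μn n = ((C n).card : ENNReal)⁻¹ •
      ∑ c ∈ C n, (volume (closedBall c (β ^ n * r₀)))⁻¹ •
        volume.restrict (closedBall c (β ^ n * r₀)))
    (μ : Measure (EuclideanSpace ℝ (Fin d)))
    -- μ is the weak limit of the μn
    (hweak : ∀ f : BoundedContinuousFunction (EuclideanSpace ℝ (Fin d)) ℝ,
      Tendsto (fun n => ∫ x, f x ∂ (μn n)) atTop (𝓝 (∫ x, f x ∂ μ))) :
    measSupport μ = (⋂ n : ℕ, ⋃ c ∈ C n, closedBall c (β ^ n * r₀)) ∧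
    ∃ A ρ₀ : ℝ, 0 < A ∧ 0 < ρ₀ ∧ ∀ x ∈ measSupport μ, ∀ r : ℝ, 0 < r → r ≤ ρ₀ →
      ENNReal.ofReal (A⁻¹ * r ^ (-Real.log N / Real.log β)) ≤ μ (closedBall x r) ∧
      μ (closedBall x r) ≤ ENNReal.ofReal (A * r ^ (-Real.log N / Real.log β)) := by
  classical
  choose T hT1 hT2 hT3 hT4 hT5 using hchild
  have hρ : ∀ n : ℕ, 0 < β ^ n * r₀ := fun n => mul_pos (pow_pos hβ0 n) hr₀
  have hne : ∀ (n : ℕ) (c : EuclideanSpace ℝ (Fin d)), (closedBall c (β ^ n * r₀)).Nonempty :=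
    fun n c => nonempty_closedBall.2 (hρ n).le
  -- pairwise disjointness at each level
  have hdisj : ∀ n : ℕ, (↑(C n) : Set (EuclideanSpace ℝ (Fin d))).Pairwise fun a b =>
      Disjoint (closedBall a (β ^ n * r₀)) (closedBall b (β ^ n * r₀)) := by
    intro n
    induction n with
    | zero => rw [hC0]; simp
    | succ n ih =>
      intro a ha b hb hab
      obtain ⟨pa, hpa, hsa⟩ := hnested n a ha
      obtain ⟨pb, hpb, hsb⟩ := hnested n b hb
      by_cases hp : pa = pb
      · subst hp
        exact hT5 n pa hpa (hT4 n pa hpa a ha hsa) (hT4 n pa hpa b hb hsb) hab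
      · exact ((ih hpa hpb hp).mono hsa hsb)
  -- sub-or-disjoint
  have hsubdisj : ∀ (k n : ℕ), ∀ c ∈ C n, ∀ c' ∈ C (n+k),
      closedBall c' (β ^ (n+k) * r₀) ⊆ closedBall c (β ^ n * r₀) ∨
      Disjoint (closedBall c' (β ^ (n+k) * r₀)) (closedBall c (β ^ n * r₀)) := by
    intro k
    induction k with
    | zero =>
      intro n c hc c' hc'
      by_cases h : c' = c
      · subst h; exact Or.inl subset_rfl
      · exact Or.inr (hdisj n hc' hc h)
    | succ k ih =>
      intro n c hc c' hc'
      obtain ⟨p, hp, hsp⟩ := hnested (n+k) c' hc'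
      rcases ih n c hc p hp with h | h
      · exact Or.inl (hsp.trans h)
      · exact Or.inr (h.mono_left hsp)
  -- counting descendants
  have hcard : ∀ (k n : ℕ), ∀ c ∈ C n,
      ((C (n+k)).filter (fun c' => closedBall c' (β ^ (n+k) * r₀) ⊆ closedBall c (β ^ n * r₀))).card
        = N ^ k := by
    intro k
    induction k with
    | zero =>
      intro n c hc
      have : ((C (n+0)).filter
          (fun c' => closedBall c' (β ^ (n+0) * r₀) ⊆ closedBall c (β ^ n * r₀))) = {c} := by
        ext c'
        simp only [Finset.mem_filter, Finset.mem_singleton]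
        constructor
        · rintro ⟨hc', hsub⟩
          by_contra h
          obtain ⟨y, hy⟩ := hne (n+0) c'
          exact Set.disjoint_left.mp (hdisj n hc' hc h) hy (hsub hy)
        · rintro rfl; exact ⟨hc, subset_rfl⟩
      rw [this]; simp
    | succ k ih =>
      intro n c hc
      have key : ((C (n+(k+1))).filter
            (fun c' => closedBall c' (β ^ (n+(k+1)) * r₀) ⊆ closedBall c (β ^ n * r₀)))
          = (((C (n+k)).filter
              (fun p => closedBall p (β ^ (n+k) * r₀) ⊆ closedBall c (β ^ n * r₀))).attach).biUnion
            (fun p => T (n+k) p.1 (Finset.mem_filter.mp p.2).1) := by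
        ext c'
        constructor
        · intro h
          obtain ⟨hc', hsub⟩ := Finset.mem_filter.mp h
          obtain ⟨p, hp, hsp⟩ := hnested (n+k) c' hc'
          have hpin : closedBall p (β ^ (n+k) * r₀) ⊆ closedBall c (β ^ n * r₀) := by
            rcases hsubdisj k n c hc p hp with h' | h'
            · exact h'
            · exfalso
              obtain ⟨y, hy⟩ := hne (n+k+1) c'
              exact Set.disjoint_left.mp h' (hsp hy) (hsub hy)
          exact Finset.mem_biUnion.mpr ⟨⟨p, Finset.mem_filter.mpr ⟨hp, hpin⟩⟩,
            Finset.mem_attach _ _, hT4 (n+k) p hp c' hc' hsp⟩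
        · intro h
          obtain ⟨⟨p, hpf⟩, -, hmem⟩ := Finset.mem_biUnion.mp h
          have hp' := Finset.mem_filter.mp hpf
          exact Finset.mem_filter.mpr
            ⟨hT1 (n+k) p hp'.1 hmem, (hT3 (n+k) p hp'.1 c' hmem).trans hp'.2⟩
      rw [key, Finset.card_biUnion]
      · simp only [hT2]
        rw [Finset.sum_const, Finset.card_attach, ih n c hc, smul_eq_mul, pow_succ]
      · rintro ⟨p, hp⟩ - ⟨q, hq⟩ - hpq
        have hp' := Finset.mem_filter.mp hp
        have hq' := Finset.mem_filter.mp hq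
        have hpq' : p ≠ q := fun h => hpq (Subtype.ext h)
        rw [Function.onFun, Finset.disjoint_left]
        intro a hap haq
        obtain ⟨y, hy⟩ := hne (n+k+1) a
        exact Set.disjoint_left.mp (hdisj (n+k) hp'.1 hq'.1 hpq')
          (hT3 (n+k) p hp'.1 a hap hy) (hT3 (n+k) q hq'.1 a haq hy)
  -- root containment and cardinality of levels
  have hroot : ∀ m : ℕ, ∀ c' ∈ C m, closedBall c' (β ^ m * r₀) ⊆ closedBall x₀ (β ^ 0 * r₀) := by
    intro m
    induction m with
    | zero =>
      intro c' hc'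
      rw [hC0, Finset.mem_singleton] at hc'
      subst hc'
      exact subset_rfl
    | succ m ih =>
      intro c' hc'
      obtain ⟨p, hp, hsp⟩ := hnested m c' hc'
      exact hsp.trans (ih p hp)
  have h0mem : x₀ ∈ C 0 := by rw [hC0]; exact Finset.mem_singleton_self x₀
  have hcardC : ∀ m : ℕ, (C m).card = N ^ m := by
    intro m
    have h := hcard m 0 x₀ h0mem
    simp only [Nat.zero_add] at h
    rwa [Finset.filter_true_of_mem (fun c' hc' => hroot m c' hc')] at h
  have hKsub : ∀ (n k : ℕ), ∀ c' ∈ C (n+k), closedBall c' (β ^ (n+k) * r₀) ⊆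
      ⋃ c ∈ C n, closedBall c (β ^ n * r₀) := by
    intro n k
    induction k with
    | zero =>
      intro c' hc' y hy
      exact Set.mem_iUnion₂.mpr ⟨c', hc', hy⟩
    | succ k ih =>
      intro c' hc'
      obtain ⟨p, hp, hsp⟩ := hnested (n+k) c' hc'
      exact hsp.trans (ih p hp)
  have hvol0 : ∀ (n : ℕ) (c : EuclideanSpace ℝ (Fin d)),
      volume (closedBall c (β ^ n * r₀)) ≠ 0 :=
    fun n c => (measure_closedBall_pos volume c (hρ n)).ne'
  have hvolt : ∀ (n : ℕ) (c : EuclideanSpace ℝ (Fin d)),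
      volume (closedBall c (β ^ n * r₀)) ≠ ⊤ :=
    fun n c => measure_closedBall_lt_top.ne
  have hNE0 : ((N : ℝ≥0∞)) ≠ 0 := Nat.cast_ne_zero.mpr (by omega : N ≠ 0)
  have hNEt : ((N : ℝ≥0∞)) ≠ ⊤ := ENNReal.natCast_ne_top N
  have happly : ∀ (m : ℕ) (s : Set (EuclideanSpace ℝ (Fin d))), MeasurableSet s →
      μn m s = ((C m).card : ℝ≥0∞)⁻¹ *
        ∑ c ∈ C m, (volume (closedBall c (β ^ m * r₀)))⁻¹ * volume (s ∩ closedBall c (β ^ m * r₀)) := by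
    intro m s hs
    rw [hμn m, Measure.smul_apply, Measure.finset_sum_apply]
    simp only [Measure.smul_apply, Measure.restrict_apply hs, smul_eq_mul]
  have hcardE : ∀ m, ((C m).card : ℝ≥0∞) = (N : ℝ≥0∞) ^ m := by
    intro m; rw [hcardC m]; push_cast; ring
  have hmeasS : ∀ (n k : ℕ), ∀ c ∈ C n,
      μn (n+k) (closedBall c (β ^ n * r₀)) = ((N : ℝ≥0∞) ^ n)⁻¹ := by
    intro n k c hc
    rw [happly (n+k) _ measurableSet_closedBall]
    have hsum : ∑ c' ∈ C (n+k), (volume (closedBall c' (β ^ (n+k) * r₀)))⁻¹ *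
        volume (closedBall c (β ^ n * r₀) ∩ closedBall c' (β ^ (n+k) * r₀))
        = (N : ℝ≥0∞) ^ k := by
      rw [← Finset.sum_filter_add_sum_filter_not (C (n+k))
        (fun c' => closedBall c' (β ^ (n+k) * r₀) ⊆ closedBall c (β ^ n * r₀))]
      have h1 : ∀ c' ∈ (C (n+k)).filter
          (fun c' => closedBall c' (β ^ (n+k) * r₀) ⊆ closedBall c (β ^ n * r₀)),
          (volume (closedBall c' (β ^ (n+k) * r₀)))⁻¹ *
            volume (closedBall c (β ^ n * r₀) ∩ closedBall c' (β ^ (n+k) * r₀)) = 1 := by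
        intro c' hc'
        obtain ⟨hm, hsub⟩ := Finset.mem_filter.mp hc'
        rw [Set.inter_eq_self_of_subset_right hsub, ENNReal.inv_mul_cancel (hvol0 _ _) (hvolt _ _)]
      have h2 : ∀ c' ∈ (C (n+k)).filter
          (fun c' => ¬ closedBall c' (β ^ (n+k) * r₀) ⊆ closedBall c (β ^ n * r₀)),
          (volume (closedBall c' (β ^ (n+k) * r₀)))⁻¹ *
            volume (closedBall c (β ^ n * r₀) ∩ closedBall c' (β ^ (n+k) * r₀)) = 0 := by
        intro c' hc'
        obtain ⟨hm, hnsub⟩ := Finset.mem_filter.mp hc'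
        have hd : Disjoint (closedBall c' (β ^ (n+k) * r₀)) (closedBall c (β ^ n * r₀)) :=
          (hsubdisj k n c hc c' hm).resolve_left hnsub
        rw [Set.disjoint_iff_inter_eq_empty.mp hd.symm, measure_empty, mul_zero]
      rw [Finset.sum_congr rfl h1, Finset.sum_congr rfl h2, Finset.sum_const, Finset.sum_const,
        hcard k n c hc]
      simp
    rw [hsum, hcardE, pow_add, ENNReal.mul_inv (Or.inl (pow_ne_zero n hNE0))
      (Or.inl (ENNReal.pow_ne_top hNEt)), mul_assoc,
      ENNReal.inv_mul_cancel (pow_ne_zero k hNE0) (ENNReal.pow_ne_top hNEt), mul_one]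
  have hprob : ∀ m, IsProbabilityMeasure (μn m) := by
    intro m
    constructor
    rw [happly m Set.univ MeasurableSet.univ]
    have : ∀ c' ∈ C m, (volume (closedBall c' (β ^ m * r₀)))⁻¹ *
        volume (Set.univ ∩ closedBall c' (β ^ m * r₀)) = 1 := by
      intro c' _
      rw [Set.univ_inter, ENNReal.inv_mul_cancel (hvol0 _ _) (hvolt _ _)]
    rw [Finset.sum_congr rfl this, Finset.sum_const, nsmul_eq_mul, mul_one,
      ENNReal.inv_mul_cancel]
    · rw [hcardE]; exact pow_ne_zero m hNE0
    · exact ENNReal.natCast_ne_top _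
  have hKmeas : ∀ n : ℕ, MeasurableSet (⋃ c ∈ C n, closedBall c (β ^ n * r₀)) := by
    intro n
    exact (isClosed_biUnion_finset (fun c _ => isClosed_closedBall)).measurableSet
  have hnull : ∀ (n k : ℕ), μn (n+k) ((⋃ c ∈ C n, closedBall c (β ^ n * r₀))ᶜ) = 0 := by
    intro n k
    rw [happly (n+k) _ (hKmeas n).compl]
    have : ∀ c' ∈ C (n+k), (volume (closedBall c' (β ^ (n+k) * r₀)))⁻¹ *
        volume ((⋃ c ∈ C n, closedBall c (β ^ n * r₀))ᶜ ∩ closedBall c' (β ^ (n+k) * r₀)) = 0 := by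
      intro c' hc'
      have he : (⋃ c ∈ C n, closedBall c (β ^ n * r₀))ᶜ ∩ closedBall c' (β ^ (n+k) * r₀) = ∅ := by
        rw [Set.eq_empty_iff_forall_notMem]
        rintro y ⟨hyc, hym⟩
        exact hyc (hKsub n k c' hc' hym)
      rw [he, measure_empty, mul_zero]
    rw [Finset.sum_congr rfl this, Finset.sum_const, smul_zero, mul_zero]
  have hNE0 : ((N : ℝ≥0∞)) ≠ 0 := Nat.cast_ne_zero.mpr (by omega)
  have hNEt : ((N : ℝ≥0∞)) ≠ ⊤ := ENNReal.natCast_ne_top N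
  -- μ is a probability measure
  have hPμ : IsProbabilityMeasure μ := by
    have h1 := hweak (BoundedContinuousFunction.const _ (1:ℝ))
    simp only [BoundedContinuousFunction.const_apply, integral_const,
      smul_eq_mul, mul_one] at h1
    have h2 : (fun n => (μn n).real Set.univ) = fun _ => (1:ℝ) := by
      funext n; rw [measureReal_def, (hprob n).measure_univ]; simp
    rw [h2] at h1
    exact ⟨(ENNReal.toReal_eq_one_iff _).mp (tendsto_nhds_unique h1 tendsto_const_nhds)⟩
  let P : ℕ → ProbabilityMeasure (EuclideanSpace ℝ (Fin d)) := fun m => ⟨μn m, hprob m⟩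
  let Q : ProbabilityMeasure (EuclideanSpace ℝ (Fin d)) := ⟨μ, hPμ⟩
  have hT : Tendsto P atTop (𝓝 Q) :=
    ProbabilityMeasure.tendsto_iff_forall_integral_tendsto.mpr hweak
  have hclosed : ∀ F : Set (EuclideanSpace ℝ (Fin d)), IsClosed F →
      limsup (fun m => μn m F) atTop ≤ μ F :=
    fun F hF => ProbabilityMeasure.limsup_measure_closed_le_of_tendsto hT hF
  have hopen : ∀ G : Set (EuclideanSpace ℝ (Fin d)), IsOpen G →
      μ G ≤ liminf (fun m => μn m G) atTop :=
    fun G hG => ProbabilityMeasure.le_liminf_measure_open_of_tendsto hT hG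
  -- lower mass bound
  have hlow : ∀ x : EuclideanSpace ℝ (Fin d),
      x ∈ (⋂ n : ℕ, ⋃ c ∈ C n, closedBall c (β ^ n * r₀)) → ∀ r : ℝ, ∀ m : ℕ,
      2*(β ^ m * r₀) ≤ r → ((N : ℝ≥0∞) ^ m)⁻¹ ≤ μ (closedBall x r) := by
    intro x hx r m hm
    obtain ⟨c, hc, hxc⟩ := Set.mem_iUnion₂.mp (Set.mem_iInter.mp hx m)
    have hsub : closedBall c (β ^ m * r₀) ⊆ closedBall x r := by
      intro y hy
      rw [mem_closedBall] at *
      have := dist_triangle y c x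
      rw [dist_comm c x] at this
      linarith [this, hy, hxc]
    have hev : ∀ᶠ j in atTop, ((N : ℝ≥0∞) ^ m)⁻¹ ≤ μn j (closedBall x r) := by
      filter_upwards [eventually_ge_atTop m] with j hj
      obtain ⟨k, rfl⟩ := Nat.exists_eq_add_of_le hj
      exact (hmeasS m k c hc).symm.le.trans (measure_mono hsub)
    exact le_trans (le_limsup_of_frequently_le hev.frequently) (hclosed _ isClosed_closedBall)
  -- per-level upper bound with packing
  have hup : ∀ (n : ℕ) (x : EuclideanSpace ℝ (Fin d)) (r : ℝ), 0 < r → 2*r ≤ β ^ n * r₀ →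
      ∀ k, μn (n+k) (ball x (2*r)) ≤ (3 : ℝ≥0∞) ^ d * ((N : ℝ≥0∞) ^ n)⁻¹ := by
    intro n x r hr h2r k
    set I := (C n).filter
      (fun c => (closedBall c (β ^ n * r₀) ∩ ball x (2*r)).Nonempty) with hI
    have hsplit : μn (n+k) (ball x (2*r)) ≤ ∑ c ∈ I, μn (n+k) (closedBall c (β ^ n * r₀)) := by
      have h1 : μn (n+k) (ball x (2*r)) ≤
          μn (n+k) ((ball x (2*r) ∩ ⋃ c ∈ C n, closedBall c (β ^ n * r₀)) ∪
            (⋃ c ∈ C n, closedBall c (β ^ n * r₀))ᶜ) := by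
        refine measure_mono ?_
        intro y hy
        by_cases h : y ∈ ⋃ c ∈ C n, closedBall c (β ^ n * r₀)
        · exact Or.inl ⟨hy, h⟩
        · exact Or.inr h
      refine h1.trans ((measure_union_le _ _).trans ?_)
      rw [hnull n k, add_zero]
      have h2 : ball x (2*r) ∩ (⋃ c ∈ C n, closedBall c (β ^ n * r₀)) ⊆
          ⋃ c ∈ I, closedBall c (β ^ n * r₀) := by
        rintro y ⟨hy1, hy2⟩
        obtain ⟨c, hc, hyc⟩ := Set.mem_iUnion₂.mp hy2
        exact Set.mem_iUnion₂.mpr ⟨c, Finset.mem_filter.mpr ⟨hc, ⟨y, hyc, hy1⟩⟩, hyc⟩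
      exact (measure_mono h2).trans (measure_biUnion_finset_le I _)
    have hIcard : (I.card : ℝ≥0∞) ≤ (3 : ℝ≥0∞) ^ d := by
      have hpair : (↑I : Set (EuclideanSpace ℝ (Fin d))).PairwiseDisjoint
          (fun c => closedBall c (β ^ n * r₀)) := by
        intro a ha b hb hab
        exact hdisj n (Finset.mem_filter.mp ha).1 (Finset.mem_filter.mp hb).1 hab
      have hvol : ∑ c ∈ I, volume (closedBall c (β ^ n * r₀)) =
          volume (⋃ c ∈ I, closedBall c (β ^ n * r₀)) :=
        (measure_biUnion_finset hpair (fun c _ => measurableSet_closedBall)).symm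
      have hsub3 : (⋃ c ∈ I, closedBall c (β ^ n * r₀)) ⊆ closedBall x (3*(β ^ n * r₀)) := by
        intro z hz
        obtain ⟨c, hc, hzc⟩ := Set.mem_iUnion₂.mp hz
        obtain ⟨y, hyc, hyx⟩ := (Finset.mem_filter.mp hc).2
        rw [mem_closedBall] at *
        rw [mem_ball] at hyx
        have t1 := dist_triangle z c x
        have t2 := dist_triangle c y x
        rw [dist_comm c y] at t2
        linarith [hzc, hyc, hyx, t1, t2]
      have hvc : ∀ c : EuclideanSpace ℝ (Fin d), volume (closedBall c (β ^ n * r₀)) =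
          ENNReal.ofReal ((β ^ n * r₀) ^ d) *
            volume (ball (0 : EuclideanSpace ℝ (Fin d)) 1) := by
        intro c
        rw [Measure.addHaar_closedBall volume c (hρ n).le, finrank_euclideanSpace_fin]
      have hkey : (I.card : ℝ≥0∞) * (ENNReal.ofReal ((β ^ n * r₀) ^ d) *
          volume (ball (0 : EuclideanSpace ℝ (Fin d)) 1)) ≤
          (3 : ℝ≥0∞) ^ d * (ENNReal.ofReal ((β ^ n * r₀) ^ d) *
          volume (ball (0 : EuclideanSpace ℝ (Fin d)) 1)) := by
        calc (I.card : ℝ≥0∞) * (ENNReal.ofReal ((β ^ n * r₀) ^ d) *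
            volume (ball (0 : EuclideanSpace ℝ (Fin d)) 1))
            = ∑ c ∈ I, volume (closedBall c (β ^ n * r₀)) := by
              rw [Finset.sum_congr rfl (fun c _ => hvc c), Finset.sum_const, nsmul_eq_mul]
          _ = volume (⋃ c ∈ I, closedBall c (β ^ n * r₀)) := hvol
          _ ≤ volume (closedBall x (3*(β ^ n * r₀))) := measure_mono hsub3
          _ = ENNReal.ofReal ((3*(β ^ n * r₀)) ^ d) *
              volume (ball (0 : EuclideanSpace ℝ (Fin d)) 1) := by
              rw [Measure.addHaar_closedBall volume x (by positivity), finrank_euclideanSpace_fin]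
          _ = (3 : ℝ≥0∞) ^ d * (ENNReal.ofReal ((β ^ n * r₀) ^ d) *
              volume (ball (0 : EuclideanSpace ℝ (Fin d)) 1)) := by
              rw [mul_pow, ENNReal.ofReal_mul (by positivity), ← mul_assoc,
                ENNReal.ofReal_pow (by norm_num), ENNReal.ofReal_ofNat]
      have hw0 : ENNReal.ofReal ((β ^ n * r₀) ^ d) *
          volume (ball (0 : EuclideanSpace ℝ (Fin d)) 1) ≠ 0 := by
        apply mul_ne_zero
        · simp [ENNReal.ofReal_eq_zero, not_le]
          positivity
        · exact (measure_ball_pos volume _ one_pos).ne'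
      have hwt : ENNReal.ofReal ((β ^ n * r₀) ^ d) *
          volume (ball (0 : EuclideanSpace ℝ (Fin d)) 1) ≠ ⊤ :=
        ENNReal.mul_ne_top ENNReal.ofReal_ne_top measure_ball_lt_top.ne
      exact (ENNReal.mul_le_mul_iff_left hw0 hwt).mp hkey
    calc μn (n+k) (ball x (2*r)) ≤ ∑ c ∈ I, μn (n+k) (closedBall c (β ^ n * r₀)) := hsplit
      _ = ∑ c ∈ I, ((N : ℝ≥0∞) ^ n)⁻¹ :=
          Finset.sum_congr rfl (fun c hc => hmeasS n k c (Finset.mem_filter.mp hc).1)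
      _ = (I.card : ℝ≥0∞) * ((N : ℝ≥0∞) ^ n)⁻¹ := by rw [Finset.sum_const, nsmul_eq_mul]
      _ ≤ (3 : ℝ≥0∞) ^ d * ((N : ℝ≥0∞) ^ n)⁻¹ := mul_le_mul_left hIcard _
  have hN0R : (0:ℝ) < N := by positivity
  have hN1R : (1:ℝ) < N := by exact_mod_cast (by omega : 1 < N)
  have hNE0 : ((N : ℝ≥0∞)) ≠ 0 := Nat.cast_ne_zero.mpr (by omega)
  have hNEt : ((N : ℝ≥0∞)) ≠ ⊤ := ENNReal.natCast_ne_top N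
  set α : ℝ := -Real.log N / Real.log β with hαdef
  have hlogβ : Real.log β < 0 := Real.log_neg hβ0 hβ1
  have hlogN : 0 < Real.log N := Real.log_pos hN1R
  have hα : 0 < α := div_pos_of_neg_of_neg (by linarith) hlogβ
  have hβα : β ^ α = (N:ℝ)⁻¹ := by
    rw [Real.rpow_def_of_pos hβ0, hαdef, mul_comm, div_mul_cancel₀ _ hlogβ.ne,
      Real.exp_neg, Real.exp_log hN0R]
  have hpowα : ∀ m : ℕ, ((β ^ m : ℝ)) ^ α = (((N:ℝ)) ^ m)⁻¹ := by
    intro m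
    rw [← Real.rpow_natCast β m, ← Real.rpow_mul hβ0.le, mul_comm,
      Real.rpow_mul hβ0.le, hβα, Real.rpow_natCast, inv_pow]
  have hcastN : ∀ m : ℕ, (((N : ℝ≥0∞) ^ m)⁻¹ : ℝ≥0∞) = ENNReal.ofReal (((N:ℝ) ^ m)⁻¹) := by
    intro m
    rw [ENNReal.ofReal_inv_of_pos (by positivity), ENNReal.ofReal_pow (by positivity),
      ENNReal.ofReal_natCast]
  have hsmall : ∀ δ : ℝ, 0 < δ → ∃ m : ℕ, 2*(β ^ m * r₀) ≤ δ := by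
    intro δ hδ
    have h := tendsto_pow_atTop_nhds_zero_of_lt_one hβ0.le hβ1
    have h2 : Tendsto (fun m : ℕ => 2*(β ^ m * r₀)) atTop (𝓝 0) := by
      simpa using (h.mul_const r₀).const_mul 2
    obtain ⟨m, hm⟩ := (h2.eventually_lt_const hδ).exists
    exact ⟨m, hm.le⟩
  have hK_eq : measSupport μ = ⋂ n : ℕ, ⋃ c ∈ C n, closedBall c (β ^ n * r₀) := by
    ext x
    simp only [measSupport, Set.mem_setOf_eq]
    constructor
    · intro hx
      by_contra hxK
      obtain ⟨n, hn⟩ : ∃ n, x ∉ ⋃ c ∈ C n, closedBall c (β ^ n * r₀) := by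
        simpa [Set.mem_iInter] using hxK
      have hKcl : IsClosed (⋃ c ∈ C n, closedBall c (β ^ n * r₀)) :=
        isClosed_biUnion_finset fun c _ => isClosed_closedBall
      obtain ⟨ε, hε, hball⟩ := Metric.mem_nhds_iff.mp (hKcl.isOpen_compl.mem_nhds hn)
      have h0 : μ (ball x ε) = 0 := by
        have h1 := hopen _ (isOpen_ball (x := x) (ε := ε))
        have hev : ∀ᶠ j in atTop, μn j (ball x ε) = 0 := by
          filter_upwards [eventually_ge_atTop n] with j hj
          obtain ⟨k, rfl⟩ := Nat.exists_eq_add_of_le hj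
          exact le_antisymm ((measure_mono hball).trans (hnull n k).le) zero_le
        rw [liminf_congr hev, liminf_const] at h1
        exact le_antisymm h1 zero_le
      exact absurd (hx ε hε) (by simp [h0])
    · intro hx ε hε
      obtain ⟨m, hm⟩ := hsmall (ε/2) (by linarith)
      calc (0:ℝ≥0∞) < ((N : ℝ≥0∞) ^ m)⁻¹ :=
            ENNReal.inv_pos.mpr (ENNReal.pow_ne_top hNEt)
        _ ≤ μ (closedBall x (ε/2)) := hlow x hx (ε/2) m hm
        _ ≤ μ (ball x ε) := measure_mono (closedBall_subset_ball (by linarith))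
  refine ⟨hK_eq, (3:ℝ)^d * (2/(β*r₀)) ^ α + (2*r₀/β) ^ α, r₀/2, by positivity, by linarith, ?_⟩
  set A : ℝ := (3:ℝ)^d * (2/(β*r₀)) ^ α + (2*r₀/β) ^ α with hAdef
  intro x hx r hr hrρ
  rw [hK_eq] at hx
  constructor
  · -- lower bound
    have hex : ∃ m : ℕ, 2*(β ^ m * r₀) ≤ r := hsmall r hr
    obtain ⟨m, hms, hminall⟩ : ∃ m : ℕ, (2*(β ^ m * r₀) ≤ r) ∧
        ∀ j < m, ¬(2*(β ^ j * r₀) ≤ r) :=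
      ⟨Nat.find hex, Nat.find_spec hex, fun j hj => Nat.find_min hex hj⟩
    have hm0 : m ≠ 0 := by
      intro h
      rw [h, pow_zero, one_mul] at hms
      linarith
    have hmin : ¬ 2*(β ^ (m-1) * r₀) ≤ r := hminall (m-1) (by omega)
    push_neg at hmin
    refine le_trans ?_ (hlow x hx r m hms)
    rw [hcastN m]
    apply ENNReal.ofReal_le_ofReal
    rw [← hpowα m]
    have h1 : β*r/(2*r₀) ≤ β ^ m := by
      have hmm : m - 1 + 1 = m := by omega
      have : β ^ (m-1+1) = β ^ (m-1) * β := pow_succ β (m-1)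
      rw [hmm] at this
      rw [this]
      rw [div_le_iff₀ (by positivity)]
      nlinarith [hmin, hβ0]
    have h2 : (β*r/(2*r₀)) ^ α ≤ (β ^ m) ^ α :=
      Real.rpow_le_rpow (by positivity) h1 hα.le
    refine le_trans ?_ h2
    have h3 : β*r/(2*r₀) = (β/(2*r₀)) * r := by ring
    rw [h3, Real.mul_rpow (by positivity) hr.le]
    have h4 : (β/(2*r₀)) ^ α = ((2*r₀/β) ^ α)⁻¹ := by
      rw [← Real.inv_rpow (by positivity), inv_div]
    have h5 : A⁻¹ ≤ (β/(2*r₀)) ^ α := by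
      rw [h4]
      apply inv_anti₀ (by positivity)
      rw [hAdef]
      nlinarith [Real.rpow_pos_of_pos (show (0:ℝ) < 2/(β*r₀) by positivity) α,
        pow_pos (show (0:ℝ) < 3 by norm_num) d]
    exact mul_le_mul_of_nonneg_right h5 (Real.rpow_nonneg hr.le α)
  · -- upper bound
    have hex : ∃ n : ℕ, β ^ (n+1) * r₀ < 2*r := by
      have h := tendsto_pow_atTop_nhds_zero_of_lt_one hβ0.le hβ1
      have h2 : Tendsto (fun j : ℕ => β ^ j * r₀) atTop (𝓝 0) := by
        simpa using h.mul_const r₀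
      obtain ⟨j, hj⟩ := (h2.eventually_lt_const (by linarith : (0:ℝ) < 2*r)).exists
      refine ⟨j, lt_of_le_of_lt ?_ hj⟩
      have : β ^ (j+1) ≤ β ^ j := pow_le_pow_of_le_one hβ0.le hβ1.le (by omega)
      nlinarith
    obtain ⟨n, hns, hminall⟩ : ∃ n : ℕ, (β ^ (n+1) * r₀ < 2*r) ∧
        ∀ j < n, ¬(β ^ (j+1) * r₀ < 2*r) :=
      ⟨Nat.find hex, Nat.find_spec hex, fun j hj => Nat.find_min hex hj⟩
    have h2rn : 2*r ≤ β ^ n * r₀ := by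
      rcases Nat.eq_zero_or_pos n with h | h
      · rw [h, pow_zero, one_mul]; linarith
      · have hmin := hminall (n-1) (by omega)
        push_neg at hmin
        have hmm : n - 1 + 1 = n := by omega
        rwa [hmm] at hmin
    have hev : ∀ᶠ j in atTop, μn j (ball x (2*r)) ≤ (3 : ℝ≥0∞) ^ d * ((N : ℝ≥0∞) ^ n)⁻¹ := by
      filter_upwards [eventually_ge_atTop n] with j hj
      obtain ⟨k, rfl⟩ := Nat.exists_eq_add_of_le hj
      exact hup n x r hr h2rn k
    calc μ (closedBall x r) ≤ μ (ball x (2*r)) :=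
          measure_mono (closedBall_subset_ball (by linarith))
      _ ≤ liminf (fun j => μn j (ball x (2*r))) atTop := hopen _ isOpen_ball
      _ ≤ liminf (fun _ : ℕ => (3 : ℝ≥0∞) ^ d * ((N : ℝ≥0∞) ^ n)⁻¹) atTop :=
          liminf_le_liminf hev
      _ = (3 : ℝ≥0∞) ^ d * ((N : ℝ≥0∞) ^ n)⁻¹ := liminf_const _
      _ ≤ ENNReal.ofReal (A * r ^ α) := by
          rw [hcastN n, show ((3:ℝ≥0∞) ^ d) = ENNReal.ofReal ((3:ℝ) ^ d) by
            rw [ENNReal.ofReal_pow (by norm_num), ENNReal.ofReal_ofNat],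
            ← ENNReal.ofReal_mul (by positivity)]
          apply ENNReal.ofReal_le_ofReal
          rw [← hpowα n]
          have h1 : β ^ n ≤ 2*r/(β*r₀) := by
            rw [le_div_iff₀ (by positivity)]
            calc β ^ n * (β * r₀) = β ^ (n+1) * r₀ := by ring
              _ ≤ 2*r := hns.le
          have h2 : (β ^ n : ℝ) ^ α ≤ (2*r/(β*r₀)) ^ α :=
            Real.rpow_le_rpow (by positivity) h1 hα.le
          have h3 : (2*r/(β*r₀) : ℝ) = (2/(β*r₀)) * r := by ring
          rw [h3, Real.mul_rpow (by positivity) hr.le] at h2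
          have h4 : (3:ℝ)^d * ((β ^ n : ℝ) ^ α) ≤ (3:ℝ)^d * ((2/(β*r₀)) ^ α * r ^ α) :=
            mul_le_mul_of_nonneg_left h2 (by positivity)
          refine h4.trans ?_
          rw [hAdef, ← mul_assoc]
          have h5 : (0:ℝ) ≤ (2*r₀/β) ^ α := Real.rpow_nonneg (by positivity) α
          nlinarith [Real.rpow_nonneg (show (0:ℝ) ≤ r by linarith) α]
end

section
/- Let d ≥ 1 and let B ⊆ ℝ^d be a closed Euclidean ball of radius r_B > 0. Let g = diag(b₊, b₁,…,b_d) with b₊ ≥ 1, 0 < b₁,…,b_d ≤ 1 and b₊b₁⋯b_d = 1. Then for every nonzero decomposable vector v = v₁ ∧ ⋯ ∧ v_j ∈ Λ^j(ℤ^{d+1}) with 1 ≤ j ≤ d+1, one has sup_{x∈B} ‖g u_x v‖ ≥ min{1, r_B}. -/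
open scoped BigOperators

/-- The unipotent matrix `u_x ∈ SL_{d+1}(ℝ)` with first row `(1, x₁, …, x_d)` and
agreeing with the identity elsewhere. -/
def ux (d : ℕ) (x : Fin d → ℝ) : Matrix (Fin (d+1)) (Fin (d+1)) ℝ :=
  Matrix.of fun i k =>
    if i = k then 1 else if i = 0 then Fin.cases 0 (fun k' => x k') k else 0

/-- The Euclidean norm of a decomposable wedge `w₁ ∧ ⋯ ∧ w_j`, computed as the
square root of the Gram determinant. -/
noncomputable def gramNorm {d j : ℕ} (u : Fin j → Fin (d+1) → ℝ) : ℝ :=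
  Real.sqrt (Matrix.det (Matrix.of fun i i' : Fin j => ∑ k : Fin (d+1), u i k * u i' k))

section Aux
open Matrix

open Matrix in
lemma one_le_det_one_add {m : ℕ} {M : Matrix (Fin m) (Fin m) ℝ} (hM : M.PosSemidef) :
    1 ≤ (1 + M).det := by
  have hH := hM.1
  have hst := hH.spectral_theorem
  set U : Matrix (Fin m) (Fin m) ℝ := (hH.eigenvectorUnitary : Matrix (Fin m) (Fin m) ℝ) with hUdef
  have hU : U * star U = 1 := (Matrix.mem_unitaryGroup_iff).mp hH.eigenvectorUnitary.2
  have h1 : (1 : Matrix (Fin m) (Fin m) ℝ) + M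
      = U * (1 + diagonal (RCLike.ofReal ∘ hH.eigenvalues)) * star U := by
    rw [mul_add, add_mul, mul_one, hU]
    conv_lhs => rw [hst]
    rw [Unitary.conjStarAlgAut_apply]
  rw [h1, det_mul_right_comm, hU, one_mul]
  have h2 : (1 : Matrix (Fin m) (Fin m) ℝ) + diagonal (RCLike.ofReal ∘ hH.eigenvalues)
      = diagonal (fun i => 1 + hH.eigenvalues i) := by
    rw [← diagonal_one, diagonal_add]
    congr 1
  rw [h2, det_diagonal]
  calc (1:ℝ) = ∏ _i : Fin m, 1 := by simp
  _ ≤ ∏ i : Fin m, (1 + hH.eigenvalues i) :=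
      Finset.prod_le_prod (fun i _ => zero_le_one) (fun i _ => by
        linarith [hM.eigenvalues_nonneg i])

open Matrix in
lemma det_nonneg_of_posSemidef {m : ℕ} {M : Matrix (Fin m) (Fin m) ℝ} (hM : M.PosSemidef) :
    0 ≤ M.det := by
  rw [hM.1.det_eq_prod_eigenvalues]
  exact Finset.prod_nonneg fun i _ => by exact_mod_cast hM.eigenvalues_nonneg i

open Matrix in
lemma posSemidef_mul_transpose {j n : ℕ} (A : Matrix (Fin j) (Fin n) ℝ) :
    (A * Aᵀ).PosSemidef := by
  have := Matrix.posSemidef_self_mul_conjTranspose A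
  rwa [Matrix.conjTranspose_eq_transpose_of_trivial] at this

lemma sq_minor_le_det_gram {j n : ℕ} (A : Matrix (Fin j) (Fin n) ℝ)
    (s : Fin j → Fin n) (hs : Function.Injective s) :
    (A.submatrix id s).det ^ 2 ≤ (A * Aᵀ).det := by
  set B := A.submatrix id s with hB
  by_cases hdB : B.det = 0
  · rw [hdB]
    simpa using det_nonneg_of_posSemidef (posSemidef_mul_transpose A)
  · have hu : IsUnit B.det := isUnit_iff_ne_zero.mpr hdB
    set C := B⁻¹ * A with hC
    have hBC : A = B * C := by
      rw [hC, ← Matrix.mul_assoc, Matrix.mul_nonsing_inv B hu, Matrix.one_mul]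
    have hCs : ∀ (i l : Fin j), C i (s l) = (1 : Matrix (Fin j) (Fin j) ℝ) i l := by
      intro i l
      have : C i (s l) = (B⁻¹ * B) i l := by
        rw [hC, Matrix.mul_apply, Matrix.mul_apply]
        exact Finset.sum_congr rfl fun m _ => rfl
      rw [this, Matrix.nonsing_inv_mul B hu]
    -- the matrix of "other columns"
    set C₀ : Matrix (Fin j) (Fin n) ℝ :=
      Matrix.of (fun i k => if k ∈ Finset.image s Finset.univ then 0 else C i k) with hC₀
    have hsplit : C * Cᵀ = 1 + C₀ * C₀ᵀ := by
      ext i i'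
      rw [Matrix.add_apply, Matrix.mul_apply, Matrix.mul_apply]
      have hterm : ∀ k : Fin n, C i k * Cᵀ k i'
          = (if k ∈ Finset.image s Finset.univ then C i k * C i' k else 0)
            + C₀ i k * C₀ᵀ k i' := by
        intro k
        have hC₀k : ∀ i'' : Fin j, C₀ i'' k = if k ∈ Finset.image s Finset.univ then 0 else C i'' k :=
          fun i'' => rfl
        simp only [Matrix.transpose_apply, hC₀k]
        by_cases hk : k ∈ Finset.image s Finset.univ
        · rw [if_pos hk, if_pos hk, if_pos hk]; ring
        · rw [if_neg hk, if_neg hk, if_neg hk]; ring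
      rw [Finset.sum_congr rfl fun k _ => hterm k, Finset.sum_add_distrib]
      congr 1
      rw [Finset.sum_ite_mem, Finset.univ_inter, Finset.sum_image (fun a _ b _ h => hs h)]
      have : ∀ l : Fin j, C i (s l) * C i' (s l)
          = (if i = l then (1:ℝ) else 0) * (if i' = l then (1:ℝ) else 0) := by
        intro l; rw [hCs i l, hCs i' l]; simp [Matrix.one_apply]
      rw [Finset.sum_congr rfl fun l _ => this l]
      by_cases h : i = i' <;> simp [Matrix.one_apply, h, Finset.sum_ite_eq]
    have h1 : (A * Aᵀ).det = B.det ^ 2 * (C * Cᵀ).det := by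
      have hassoc : B * C * (Cᵀ * Bᵀ) = B * (C * Cᵀ) * Bᵀ := by
        rw [Matrix.mul_assoc, ← Matrix.mul_assoc C, ← Matrix.mul_assoc]
      rw [hBC, Matrix.transpose_mul, hassoc, Matrix.det_mul, Matrix.det_mul,
        Matrix.det_transpose]
      ring
    have h2 : 1 ≤ (C * Cᵀ).det := by
      rw [hsplit]
      exact one_le_det_one_add (posSemidef_mul_transpose C₀)
    calc B.det ^ 2 = B.det ^ 2 * 1 := by ring
    _ ≤ B.det ^ 2 * (C * Cᵀ).det := by
        exact mul_le_mul_of_nonneg_left h2 (sq_nonneg _)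
    _ = (A * Aᵀ).det := h1.symm

lemma exists_nonzero_minor {j n : ℕ} (V : Matrix (Fin j) (Fin n) ℝ)
    (hli : LinearIndependent ℝ (fun i => V i)) :
    ∃ s : Fin j → Fin n, Function.Injective s ∧
      (Matrix.of fun l i => V i (s l)).det ≠ 0 := by
  classical
  -- columns of V
  set cols : Fin n → (Fin j → ℝ) := fun k i => V i k with hcols
  have hrange : Set.range cols = Set.range Vᵀ := by
    simp only [hcols]; rfl
  -- span of columns is everything
  have hspan : Submodule.span ℝ (Set.range cols) = ⊤ := by
    apply Submodule.eq_top_of_finrank_eq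
    have h1 : Module.finrank ℝ (Submodule.span ℝ (Set.range cols)) = V.rank := by
      rw [hrange, Matrix.rank_eq_finrank_span_cols]; rfl
    have h2 : V.rank = Vᵀ.rank := (Matrix.rank_transpose V).symm
    have h3 : Vᵀ.rank = j := by
      rw [Matrix.rank_eq_finrank_span_cols]
      change Module.finrank ℝ (Submodule.span ℝ (Set.range V)) = j
      have : (Set.range (fun i => V i)) = Set.range V := rfl
      rw [show Module.finrank ℝ (Submodule.span ℝ (Set.range V))
            = Fintype.card (Fin j) from (finrank_span_eq_card (by exact hli)),
        Fintype.card_fin]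
    rw [h1, h2, h3, Module.finrank_pi]
    simp
  obtain ⟨b, hbsub, hbspan, hbli⟩ := exists_linearIndependent ℝ (Set.range cols)
  rw [hspan] at hbspan
  have hbfin : b.Finite := hbli.setFinite
  haveI := hbfin.fintype
  have hbbasis : Module.Basis b ℝ (Fin j → ℝ) := Module.Basis.mk hbli (by rw [Subtype.range_coe, hbspan])
  have hcard : Fintype.card b = j := by
    have := Module.finrank_eq_card_basis hbbasis
    rw [Module.finrank_pi] at this
    rw [Fintype.card_fin] at this
    omega
  obtain ⟨e⟩ : Nonempty (Fin j ≃ b) := by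
    exact ⟨(Fintype.equivFinOfCardEq hcard).symm⟩
  have hpick : ∀ l : Fin j, ∃ k : Fin n, cols k = (e l : Fin j → ℝ) :=
    fun l => hbsub (e l).2
  choose s hsprop using hpick
  refine ⟨s, ?_, ?_⟩
  · intro l l' h
    apply e.injective
    apply Subtype.ext
    rw [← hsprop l, ← hsprop l', h]
  · -- rows of the minor matrix are the chosen independent vectors
    intro hdet
    set M : Matrix (Fin j) (Fin j) ℝ := Matrix.of fun l i => V i (s l) with hM
    have hrows : ∀ l, M l = (e l : Fin j → ℝ) := by
      intro l
      funext i
      have := congrFun (hsprop l) i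
      simpa [hcols, hM] using this
    have hMli : LinearIndependent ℝ (fun l => M l) := by
      have : LinearIndependent ℝ (fun l : Fin j => (e l : Fin j → ℝ)) :=
        hbli.comp e e.injective
      rw [show (fun l => M l) = (fun l : Fin j => (e l : Fin j → ℝ)) from funext hrows]
      exact this
    obtain ⟨c, hc0, hc⟩ := (Matrix.exists_vecMul_eq_zero_iff).mpr hdet
    have := Fintype.linearIndependent_iff.mp hMli c ?_
    · exact hc0 (funext fun l => this l)
    · funext k
      have := congrFun hc k
      simpa [Matrix.vecMul, dotProduct, Finset.sum_apply] using this

lemma ux_mulVec_ne_zero {d : ℕ} (x : Fin d → ℝ) (w : Fin (d+1) → ℝ) {k : Fin (d+1)}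
    (hk : k ≠ 0) : (ux d x).mulVec w k = w k := by
  rw [Matrix.mulVec, dotProduct]
  rw [Finset.sum_eq_single k]
  · simp [ux]
  · intro m _ hm
    simp [ux, (Ne.symm hm : ¬ k = m), hk]
  · simp
lemma ux_mulVec_zero {d : ℕ} (x : Fin d → ℝ) (w : Fin (d+1) → ℝ) :
    (ux d x).mulVec w 0 = w 0 + ∑ k : Fin d, x k * w k.succ := by
  rw [Matrix.mulVec, dotProduct, Fin.sum_univ_succ]
  simp [ux, (Fin.succ_ne_zero _).symm, fun k : Fin d => (Fin.succ_ne_zero k).symm]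

lemma det_updateRow_finset_sum {j : ℕ} (base : Matrix (Fin j) (Fin j) ℝ) (l₀ : Fin j)
    {ι : Type*} (s : Finset ι) (f : ι → (Fin j → ℝ)) :
    (base.updateRow l₀ (∑ k ∈ s, f k)).det = ∑ k ∈ s, (base.updateRow l₀ (f k)).det := by
  classical
  induction s using Finset.induction_on with
  | empty =>
      rw [Finset.sum_empty, Finset.sum_empty,
        show (0 : Fin j → ℝ) = (0:ℝ) • (0 : Fin j → ℝ) by simp,
        Matrix.det_updateRow_smul]
      simp
  | insert _ _ hk ih =>
      rw [Finset.sum_insert hk, Finset.sum_insert hk, Matrix.det_updateRow_add, ih]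

lemma det_W_expand {d j : ℕ} (Vr : Matrix (Fin j) (Fin (d+1)) ℝ) (x : Fin d → ℝ)
    (T : Fin j → Fin (d+1)) (l₀ : Fin j) (hT0 : T l₀ = 0)
    (hT : ∀ l, l ≠ l₀ → T l ≠ 0) :
    (Matrix.of fun l i => ((ux d x).mulVec (Vr i)) (T l)).det
      = (Matrix.of fun l i => Vr i (T l)).det
        + ∑ k : Fin d, x k *
            (Matrix.of fun l i => Vr i (Function.update T l₀ k.succ l)).det := by
  classical
  set base : Matrix (Fin j) (Fin j) ℝ := Matrix.of fun l i => Vr i (T l) with hbase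
  have hM : (Matrix.of fun l i => ((ux d x).mulVec (Vr i)) (T l))
      = base.updateRow l₀ ((fun i => Vr i 0) + ∑ k : Fin d, x k • (fun i => Vr i k.succ)) := by
    ext l i
    rw [Matrix.updateRow_apply]
    by_cases hl : l = l₀
    · subst hl
      rw [if_pos rfl]
      rw [Matrix.of_apply, hT0, ux_mulVec_zero]
      simp [Finset.sum_apply]
    · rw [if_neg hl, Matrix.of_apply, ux_mulVec_ne_zero x _ (hT l hl)]
      rfl
  rw [hM, Matrix.det_updateRow_add, det_updateRow_finset_sum]
  congr 1
  · have : (fun i => Vr i 0) = base l₀ := by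
      funext i; rw [hbase, Matrix.of_apply, hT0]
    rw [this, Matrix.updateRow_eq_self]
  · refine Finset.sum_congr rfl fun k _ => ?_
    rw [Matrix.det_updateRow_smul]
    congr 2
    ext l i
    rw [Matrix.updateRow_apply]
    by_cases hl : l = l₀
    · subst hl; simp [Function.update_self]
    · rw [if_neg hl, hbase]
      simp only [Matrix.of_apply]
      rw [Function.update_of_ne hl]

lemma continuous_gramfun {d j : ℕ} (D : Fin (d+1) → ℝ) (Vr : Matrix (Fin j) (Fin (d+1)) ℝ) :
    Continuous (fun x : EuclideanSpace ℝ (Fin d) => gramNorm (fun i =>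
      (Matrix.diagonal D * ux d (fun k => x k)).mulVec (fun k => Vr i k))) := by
  classical
  have hentry : ∀ (i : Fin j) (k : Fin (d+1)),
      Continuous (fun x : EuclideanSpace ℝ (Fin d) =>
        ((Matrix.diagonal D * ux d (fun k' => x k')).mulVec (fun k' => Vr i k')) k) := by
    intro i k
    have hfor : ∀ x : EuclideanSpace ℝ (Fin d),
        ((Matrix.diagonal D * ux d (fun k' => x k')).mulVec (fun k' => Vr i k')) k
          = D k * ((ux d (fun k' => x k')).mulVec (Vr i)) k := by
      intro x
      rw [← Matrix.mulVec_mulVec, Matrix.mulVec_diagonal]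
    rw [show (fun x : EuclideanSpace ℝ (Fin d) =>
        ((Matrix.diagonal D * ux d (fun k' => x k')).mulVec (fun k' => Vr i k')) k)
        = fun x : EuclideanSpace ℝ (Fin d) =>
            D k * ((ux d (fun k' => x k')).mulVec (Vr i)) k from funext hfor]
    induction k using Fin.cases with
    | zero =>
        have : ∀ x : EuclideanSpace ℝ (Fin d),
            ((ux d (fun k' => x k')).mulVec (Vr i)) 0
              = Vr i 0 + ∑ k' : Fin d, x k' * Vr i k'.succ := fun x => ux_mulVec_zero _ _
        rw [show (fun x : EuclideanSpace ℝ (Fin d) =>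
            D 0 * ((ux d (fun k' => x k')).mulVec (Vr i)) 0)
            = fun x : EuclideanSpace ℝ (Fin d) =>
                D 0 * (Vr i 0 + ∑ k' : Fin d, x k' * Vr i k'.succ) from
          funext fun x => by rw [this x]]
        refine continuous_const.mul (continuous_const.add ?_)
        refine continuous_finset_sum _ fun k' _ => ?_
        exact ((EuclideanSpace.proj k').continuous).mul continuous_const
    | succ k₁ =>
        have : ∀ x : EuclideanSpace ℝ (Fin d),
            ((ux d (fun k' => x k')).mulVec (Vr i)) k₁.succ = Vr i k₁.succ :=
          fun x => ux_mulVec_ne_zero _ _ (Fin.succ_ne_zero k₁)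
        rw [show (fun x : EuclideanSpace ℝ (Fin d) =>
            D k₁.succ * ((ux d (fun k' => x k')).mulVec (Vr i)) k₁.succ)
            = fun _ : EuclideanSpace ℝ (Fin d) => D k₁.succ * Vr i k₁.succ from
          funext fun x => by rw [this x]]
        exact continuous_const
  unfold gramNorm
  apply Real.continuous_sqrt.comp
  apply Continuous.matrix_det
  apply continuous_matrix
  intro i i'
  simp only [Matrix.of_apply]
  exact continuous_finset_sum _ fun k _ => (hentry i k).mul (hentry i' k)

lemma le_biSup_of_continuous {X : Type*} [TopologicalSpace X] {S : Set X} {f : X → ℝ}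
    (hf : Continuous f) (hS : IsCompact S) {x : X} (hx : x ∈ S) {c : ℝ} (hc : c ≤ f x) :
    c ≤ ⨆ y ∈ S, f y := by
  obtain ⟨Mb, hMb⟩ := (hS.image hf).bddAbove
  have hbdd : BddAbove (Set.range (fun y => ⨆ (_ : y ∈ S), f y)) := by
    refine ⟨max Mb 0, ?_⟩
    rintro w ⟨z, rfl⟩
    show (⨆ (_ : z ∈ S), f z) ≤ max Mb 0
    by_cases hz : z ∈ S
    · rw [ciSup_pos (f := fun _ => f z) hz]
      exact le_max_of_le_left (hMb (Set.mem_image_of_mem f hz))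
    · haveI : IsEmpty (z ∈ S) := ⟨hz⟩
      rw [Real.iSup_of_isEmpty (fun _ => f z)]
      exact le_max_right _ _
  calc c ≤ f x := hc
  _ = ⨆ (_ : x ∈ S), f x := (ciSup_pos (f := fun _ => f x) hx).symm
  _ ≤ ⨆ y, ⨆ (_ : y ∈ S), f y := le_ciSup hbdd x

end Aux

set_option maxHeartbeats 1000000 in
set_option synthInstance.maxHeartbeats 1000000 in
open Matrix in
theorem sup_norm_on_ball_lower_bound (d j : ℕ) (hd : 1 ≤ d) (hj : 1 ≤ j)
    (hjd : j ≤ d + 1) (x₀ : EuclideanSpace ℝ (Fin d)) (rB : ℝ) (hrB : 0 < rB)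
    (bp : ℝ) (bb : Fin d → ℝ) (hbp : 1 ≤ bp) (hbb : ∀ i, 0 < bb i ∧ bb i ≤ 1)
    (hdet : bp * ∏ i, bb i = 1)
    (v : Fin j → Fin (d+1) → ℤ)
    (hv : ExteriorAlgebra.ιMulti ℝ j (fun i => fun k => (v i k : ℝ)) ≠ 0) :
    min 1 rB ≤ ⨆ x ∈ Metric.closedBall x₀ rB,
      gramNorm (fun i =>
        (Matrix.diagonal (Fin.cons bp bb) * ux d (fun k => x k)).mulVec
          (fun k => (v i k : ℝ))) := by
  classical
  set S := Metric.closedBall x₀ rB with hS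
  set Vr : Matrix (Fin j) (Fin (d+1)) ℝ := Matrix.of fun i k => (v i k : ℝ) with hVr
  set D : Fin (d+1) → ℝ := Fin.cons bp bb with hD
  have hD0 : D 0 = bp := rfl
  have hDsucc : ∀ k : Fin d, D k.succ = bb k := fun k => rfl
  have hDpos : ∀ k, 0 < D k := by
    intro k
    induction k using Fin.cases with
    | zero => rw [hD0]; linarith
    | succ k' => rw [hDsucc]; exact (hbb k').1
  -- linear independence of the rows
  have hli : LinearIndependent ℝ (fun i => fun k => (v i k : ℝ)) := by
    by_contra h
    exact hv (AlternatingMap.map_linearDependent _ _ h)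
  -- integer minors
  set minor : (Fin j → Fin (d+1)) → ℤ :=
    fun s => (Matrix.of fun l i => v i (s l)).det with hminor
  have hcast : ∀ s : Fin j → Fin (d+1),
      ((minor s : ℤ) : ℝ) = (Matrix.of fun l i => Vr i (s l)).det := by
    intro s
    have h1 : ((minor s : ℤ) : ℝ)
        = (Int.castRingHom ℝ) ((Matrix.of fun l i => v i (s l)).det) := rfl
    rw [h1, RingHom.map_det]
    congr 1
  have hvanish : ∀ s : Fin j → Fin (d+1), ¬Function.Injective s → minor s = 0 := by
    intro s hs
    rw [Function.not_injective_iff] at hs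
    obtain ⟨a, b, hab, hne⟩ := hs
    exact Matrix.det_zero_of_row_eq hne (funext fun i => by simp [hab])
  -- the matrix A y
  set A : (Fin d → ℝ) → Matrix (Fin j) (Fin (d+1)) ℝ := fun y =>
    Matrix.of fun i k =>
      ((Matrix.diagonal D * ux d y).mulVec (fun k' => (v i k' : ℝ))) k with hA
  have hAentry : ∀ (y : Fin d → ℝ) (i : Fin j) (k : Fin (d+1)),
      A y i k = D k * ((ux d y).mulVec (Vr i)) k := by
    intro y i k
    rw [hA]
    simp only [Matrix.of_apply]
    rw [← Matrix.mulVec_mulVec, Matrix.mulVec_diagonal]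
    rfl

  -- KEY: find T, l₀, xs with a large minor
  have key : ∃ (T : Fin j → Fin (d+1)) (l₀ : Fin j) (xs : EuclideanSpace ℝ (Fin d)),
      Function.Injective T ∧ T l₀ = 0 ∧ xs ∈ S ∧
      min 1 rB ≤
        |(Matrix.of fun l i => ((ux d (fun k => xs k)).mulVec (Vr i)) (T l)).det| := by
    by_cases hcaseB : ∀ s : Fin j → Fin (d+1), (∀ l, s l ≠ 0) → minor s = 0
    · -- Case B
      obtain ⟨s, hsinj, hsdet⟩ := exists_nonzero_minor Vr (by exact hli)
      have hm : minor s ≠ 0 := by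
        intro h0
        apply hsdet
        have h1 := hcast s
        rw [h0] at h1
        simpa using h1.symm
      obtain ⟨l₀, hl₀⟩ : ∃ l₀, s l₀ = 0 := by
        by_contra h
        push_neg at h
        exact hm (hcaseB s h)
      have hTne : ∀ l, l ≠ l₀ → s l ≠ 0 := by
        intro l hl hcon
        exact hl (hsinj (hcon.trans hl₀.symm))
      refine ⟨s, l₀, x₀, hsinj, hl₀, Metric.mem_closedBall_self (le_of_lt hrB), ?_⟩
      rw [det_W_expand Vr (fun k => x₀ k) s l₀ hl₀ hTne]
      have hzero : ∀ k : Fin d,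
          (Matrix.of fun l i => Vr i (Function.update s l₀ k.succ l)).det = 0 := by
        intro k
        rw [← hcast]
        have hupd : ∀ l, Function.update s l₀ k.succ l ≠ 0 := by
          intro l
          by_cases hl : l = l₀
          · subst hl; rw [Function.update_self]; exact Fin.succ_ne_zero k
          · rw [Function.update_of_ne hl]; exact hTne l hl
        exact_mod_cast hcaseB _ hupd
      rw [Finset.sum_congr rfl (fun k _ => by rw [hzero k, mul_zero]),
        Finset.sum_const_zero, add_zero, ← hcast]
      have h1 : (1:ℝ) ≤ |((minor s : ℤ) : ℝ)| := by
        rw [← Int.cast_abs]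
        exact_mod_cast Int.one_le_abs hm
      exact le_trans (min_le_left _ _) h1
    · -- Case A
      push_neg at hcaseB
      obtain ⟨s, hs0, hm⟩ := hcaseB
      have hsinj : Function.Injective s := by
        by_contra h
        exact hm (hvanish s h)
      set l₀ : Fin j := ⟨0, hj⟩ with hl₀def
      obtain ⟨k₀, hk₀⟩ : ∃ k₀ : Fin d, s l₀ = k₀.succ := by
        rcases Fin.eq_succ_of_ne_zero (hs0 l₀) with ⟨k₀, h⟩
        exact ⟨k₀, h⟩
      set T : Fin j → Fin (d+1) := Function.update s l₀ 0 with hTdef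
      have hT0 : T l₀ = 0 := Function.update_self _ _ _
      have hTl : ∀ l, l ≠ l₀ → T l = s l := fun l hl => Function.update_of_ne hl _ _
      have hTne : ∀ l, l ≠ l₀ → T l ≠ 0 := fun l hl => (hTl l hl) ▸ hs0 l
      have hTinj : Function.Injective T := by
        intro a b hab
        by_cases ha : a = l₀
        · by_cases hb : b = l₀
          · rw [ha, hb]
          · exfalso; apply hTne b hb; rw [← hab, ha, hT0]
        · by_cases hb : b = l₀
          · exfalso; apply hTne a ha; rw [hab, hb, hT0]
          · apply hsinj; rw [← hTl a ha, ← hTl b hb, hab]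
      set c : Fin d → ℝ := fun k => ((minor (Function.update s l₀ k.succ) : ℤ) : ℝ) with hc
      have hupdate : ∀ k : Fin d,
          Function.update T l₀ k.succ = Function.update s l₀ k.succ := by
        intro k; rw [hTdef, Function.update_idem]
      have hck₀ : c k₀ = ((minor s : ℤ) : ℝ) := by
        have h3 : Function.update s l₀ k₀.succ = s := by
          rw [← hk₀]; exact Function.update_eq_self _ _
        show ((minor (Function.update s l₀ k₀.succ) : ℤ) : ℝ) = _
        rw [h3]
      have habs : (1:ℝ) ≤ |c k₀| := by
        rw [hck₀, ← Int.cast_abs]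
        exact_mod_cast Int.one_le_abs hm
      have hexp : ∀ y : Fin d → ℝ,
          (Matrix.of fun l i => ((ux d y).mulVec (Vr i)) (T l)).det
            = ((minor T : ℤ) : ℝ) + ∑ k, y k * c k := by
        intro y
        rw [det_W_expand Vr y T l₀ hT0 hTne, ← hcast]
        congr 1
        refine Finset.sum_congr rfl fun k _ => ?_
        congr 1
        rw [← hcast, hupdate k]
      set a : ℝ := ((minor T : ℤ) : ℝ) + ∑ k, x₀ k * c k with ha
      set t : ℝ := if 0 ≤ a * c k₀ then rB else -rB with ht
      set xs : EuclideanSpace ℝ (Fin d) := x₀ + EuclideanSpace.single k₀ t with hxs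
      have hxsmem : xs ∈ S := by
        rw [hS, Metric.mem_closedBall, hxs, dist_self_add_left,
          EuclideanSpace.norm_single, ht]
        rw [Real.norm_eq_abs]
        split
        · rw [abs_of_pos hrB]
        · rw [abs_of_neg (by linarith : -rB < 0)]; linarith
      have hxsk : ∀ k : Fin d, xs k = x₀ k + if k = k₀ then t else 0 := by
        intro k
        rw [hxs]
        have : (x₀ + EuclideanSpace.single k₀ t) k = x₀ k + EuclideanSpace.single k₀ t k := rfl
        rw [this, EuclideanSpace.single_apply]
      have hval : (Matrix.of fun l i => ((ux d (fun k => xs k)).mulVec (Vr i)) (T l)).det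
          = a + t * c k₀ := by
        rw [hexp (fun k => xs k)]
        have hsum : ∑ k, xs k * c k = (∑ k, x₀ k * c k) + t * c k₀ := by
          rw [Finset.sum_congr rfl (fun k _ => by rw [hxsk k, add_mul]),
            Finset.sum_add_distrib]
          congr 1
          rw [Finset.sum_congr rfl (fun k _ => by rw [ite_mul, zero_mul])]
          rw [Finset.sum_ite_eq' Finset.univ k₀ (fun k => t * c k)]
          simp
        rw [hsum, ha]
        ring
      refine ⟨T, l₀, xs, hTinj, hT0, hxsmem, ?_⟩
      rw [hval]
      have h2 : (rB * c k₀)^2 ≤ (a + t * c k₀)^2 := by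
        rw [ht]
        by_cases hsign : 0 ≤ a * c k₀
        · rw [if_pos hsign]
          nlinarith [sq_nonneg a, mul_nonneg hrB.le hsign]
        · rw [if_neg hsign]
          push_neg at hsign
          nlinarith [sq_nonneg a, mul_nonneg hrB.le (neg_nonneg.mpr hsign.le)]
      calc min 1 rB ≤ rB := min_le_right _ _
      _ = rB * 1 := (mul_one rB).symm
      _ ≤ rB * |c k₀| := mul_le_mul_of_nonneg_left habs (le_of_lt hrB)
      _ = |rB * c k₀| := by rw [abs_mul, abs_of_pos hrB]
      _ = Real.sqrt ((rB * c k₀)^2) := (Real.sqrt_sq_eq_abs _).symm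
      _ ≤ Real.sqrt ((a + t * c k₀)^2) := Real.sqrt_le_sqrt h2
      _ = |a + t * c k₀| := Real.sqrt_sq_eq_abs _
  -- use the key point
  obtain ⟨T, l₀, xs, hTinj, hT0, hxsS, hμ⟩ := key
  have hFpos : 0 < ∏ l, D (T l) := Finset.prod_pos fun l _ => hDpos (T l)
  have hF : 1 ≤ ∏ l, D (T l) := by
    have h0mem : (0 : Fin (d+1)) ∈ Finset.image T Finset.univ := by
      rw [Finset.mem_image]; exact ⟨l₀, Finset.mem_univ _, hT0⟩
    have hprodim : ∏ l, D (T l) = ∏ k ∈ Finset.image T Finset.univ, D k :=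
      (Finset.prod_image (fun a _ b _ h => hTinj h)).symm
    have hsplit := Finset.prod_sdiff (Finset.subset_univ (Finset.image T Finset.univ))
      (f := D)
    have hone : ∏ k : Fin (d+1), D k = 1 := by
      rw [Fin.prod_univ_succ]
      simp only [hD, Fin.cons_zero, Fin.cons_succ]
      exact hdet
    have hle1 : ∏ k ∈ Finset.univ \ Finset.image T Finset.univ, D k ≤ 1 := by
      apply Finset.prod_le_one
      · intro k _; exact le_of_lt (hDpos k)
      · intro k hk
        rcases Finset.mem_sdiff.mp hk with ⟨-, hknot⟩
        have hk0 : k ≠ 0 := fun h => hknot (h ▸ h0mem)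
        obtain ⟨k', rfl⟩ := Fin.eq_succ_of_ne_zero hk0
        rw [hDsucc]; exact (hbb k').2
    have hpos2 : 0 < ∏ k ∈ Finset.image T Finset.univ, D k :=
      Finset.prod_pos fun k _ => hDpos k
    rw [hprodim]
    nlinarith [hsplit, hone, hle1, hpos2]
  set y : Fin d → ℝ := fun k => xs k with hy
  have hgram : gramNorm (fun i =>
        (Matrix.diagonal (Fin.cons bp bb) * ux d y).mulVec (fun k => (v i k : ℝ)))
      = Real.sqrt ((A y * (A y)ᵀ).det) := by
    unfold gramNorm
    congr 1
  have hsub : ((A y).submatrix id T).det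
      = (∏ l, D (T l)) * (Matrix.of fun l i => ((ux d y).mulVec (Vr i)) (T l)).det := by
    have h1 : (A y).submatrix id T
        = Matrix.of fun l l' => D (T l') *
            (Matrix.of (fun l i => ((ux d y).mulVec (Vr i)) (T l)))ᵀ l l' := by
      ext l l'
      rw [Matrix.submatrix_apply]
      show A y l (T l') = _
      rw [hAentry y l (T l')]
      rfl
    rw [h1, Matrix.det_mul_row, Matrix.det_transpose]
  have hfxs : min 1 rB ≤ gramNorm (fun i =>
      (Matrix.diagonal (Fin.cons bp bb) * ux d (fun k => xs k)).mulVec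
        (fun k => (v i k : ℝ))) := by
    rw [show (fun k : Fin d => xs k) = y from rfl, hgram]
    have hsq := sq_minor_le_det_gram (A y) T hTinj
    calc min 1 rB ≤ |(Matrix.of fun l i => ((ux d y).mulVec (Vr i)) (T l)).det| := hμ
    _ ≤ (∏ l, D (T l)) * |(Matrix.of fun l i => ((ux d y).mulVec (Vr i)) (T l)).det| := by
        nlinarith [abs_nonneg ((Matrix.of fun l i => ((ux d y).mulVec (Vr i)) (T l)).det)]
    _ = |(∏ l, D (T l)) * (Matrix.of fun l i => ((ux d y).mulVec (Vr i)) (T l)).det| := by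
        rw [abs_mul, abs_of_pos hFpos]
    _ = Real.sqrt (((∏ l, D (T l)) * (Matrix.of fun l i =>
          ((ux d y).mulVec (Vr i)) (T l)).det)^2) := (Real.sqrt_sq_eq_abs _).symm
    _ = Real.sqrt ((((A y).submatrix id T).det)^2) := by rw [hsub]
    _ ≤ Real.sqrt ((A y * (A y)ᵀ).det) := Real.sqrt_le_sqrt hsq
  have hcont : Continuous (fun x : EuclideanSpace ℝ (Fin d) => gramNorm (fun i =>
      (Matrix.diagonal (Fin.cons bp bb) * ux d (fun k => x k)).mulVec
        (fun k => (v i k : ℝ)))) := continuous_gramfun (Fin.cons bp bb) Vr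
  have hcompact : IsCompact S := isCompact_closedBall x₀ rB
  exact le_biSup_of_continuous hcont hcompact hxsS hfxs
end

section
/- If S ⊆ ℝ^d is hyperplane absolute winning (HAW), then S ∩ K ≠ ∅ for every hyperplane diffuse set K ⊆ ℝ^d. -/
open Metric

/-- `S` is hyperplane absolute winning: for every `0 < β < 1/3`, Alice has a
strategy (a function of the history of Bob's balls, each ball recorded as a
centre-radius pair) whose moves are closed `ε r_n`-neighborhoods of hyperplanes
with `0 < ε ≤ β`, such that for every play of Bob — balls `B_{n+1} ⊆ B_n \ A_{n+1}`
with radii `r_{n+1} ≥ β r_n`, starting from any ball of positive radius — the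
intersection `⋂ B_n` meets `S`. -/
def HAW {d : ℕ} (S : Set (EuclideanSpace ℝ (Fin d))) : Prop :=
  ∀ β : ℝ, 0 < β → β < 1/3 →
    ∃ F : (n : ℕ) → (Fin (n+1) → EuclideanSpace ℝ (Fin d) × ℝ) →
        Set (EuclideanSpace ℝ (Fin d)),
      (∀ (n : ℕ) (hist : Fin (n+1) → EuclideanSpace ℝ (Fin d) × ℝ),
        ∃ (H : Set (EuclideanSpace ℝ (Fin d))) (ε : ℝ), IsHyperplane H ∧
          0 < ε ∧ ε ≤ β ∧ F n hist = cthickening (ε * (hist (Fin.last n)).2) H) ∧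
      ∀ B : ℕ → EuclideanSpace ℝ (Fin d) × ℝ, 0 < (B 0).2 →
        (∀ n : ℕ, β * (B n).2 ≤ (B (n+1)).2 ∧
          closedBall (B (n+1)).1 (B (n+1)).2 ⊆
            closedBall (B n).1 (B n).2 \ F n (fun i => B i.val)) →
        (S ∩ ⋂ n : ℕ, closedBall (B n).1 (B n).2).Nonempty

/-- a hyperplane absolute winning set meets every hyperplane
diffuse set. -/
theorem HAW_inter_hyperplaneDiffuse_nonempty {d : ℕ}
    (S : Set (EuclideanSpace ℝ (Fin d))) (hS : HAW S)
    (K : Set (EuclideanSpace ℝ (Fin d))) (hKne : K.Nonempty) (hKcl : IsClosed K)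
    (hdiff : ∃ β : ℝ, 0 < β ∧ ∃ r₀ : ℝ, 0 < r₀ ∧
      ∀ x ∈ K, ∀ r : ℝ, 0 < r → r ≤ r₀ →
        ∀ H : Set (EuclideanSpace ℝ (Fin d)), IsHyperplane H →
          (K ∩ (closedBall x r \ cthickening (β * r) H)).Nonempty) :
    (S ∩ K).Nonempty := by
  classical
  obtain ⟨β₀, hβ₀, r₀, hr₀, hdif⟩ := hdiff
  obtain ⟨x₀, hx₀⟩ := hKne
  set b : ℝ := min β₀ 1 with hb_def
  have hb0 : 0 < b := lt_min hβ₀ one_pos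
  have hb1 : b ≤ 1 := min_le_right _ _
  -- diffuseness for the constant b
  have hdif' : ∀ x ∈ K, ∀ r : ℝ, 0 < r → r ≤ r₀ →
      ∀ H : Set (EuclideanSpace ℝ (Fin d)), IsHyperplane H →
        (K ∩ (closedBall x r \ cthickening (b * r) H)).Nonempty := by
    intro x hx r hr hrr H hH
    obtain ⟨y, hyK, hy1, hy2⟩ := hdif x hx r hr hrr H hH
    refine ⟨y, hyK, hy1, fun h => hy2 ?_⟩
    exact cthickening_mono (mul_le_mul_of_nonneg_right (min_le_left _ _) hr.le) H h
  set βg : ℝ := b / 6 with hβg_def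
  have hβg0 : 0 < βg := by positivity
  have hβg1 : βg ≤ 1 / 6 := by rw [hβg_def]; linarith
  have hβg3 : βg < 1 / 3 := by linarith
  obtain ⟨F, hF1, hF2⟩ := hS βg hβg0 hβg3
  -- key step: from a good current ball, Bob has a good response
  have key : ∀ (n : ℕ) (hist : Fin (n+1) → EuclideanSpace ℝ (Fin d) × ℝ),
      (hist (Fin.last n)).1 ∈ K → 0 < (hist (Fin.last n)).2 → (hist (Fin.last n)).2 ≤ r₀ →
      ∃ p : EuclideanSpace ℝ (Fin d) × ℝ, p.1 ∈ K ∧ p.2 = βg * (hist (Fin.last n)).2 ∧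
        closedBall p.1 p.2 ⊆
          closedBall (hist (Fin.last n)).1 (hist (Fin.last n)).2 \ F n hist := by
    intro n hist hxK hr hrr
    set x := (hist (Fin.last n)).1 with hx_def
    set r := (hist (Fin.last n)).2 with hr_def
    obtain ⟨H, ε, hH, hε0, hεβ, hFe⟩ := hF1 n hist
    obtain ⟨y, hyK, hy1, hy2⟩ :=
      hdif' x hxK (r / 2) (by linarith) (by linarith) H hH
    refine ⟨(y, βg * r), hyK, rfl, ?_⟩
    intro z hz
    simp only [mem_closedBall] at hz hy1
    constructor
    · have htri := dist_triangle z y x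
      have hβr : βg * r ≤ r / 6 := by nlinarith
      simp only [mem_closedBall]
      linarith
    · rw [hFe]
      intro hzA
      apply hy2
      rw [mem_cthickening_iff] at hzA ⊢
      have h1 : EMetric.infEdist y H ≤ EMetric.infEdist z H + edist y z :=
        EMetric.infEdist_le_infEdist_add_edist
      have h2 : edist y z ≤ ENNReal.ofReal (βg * r) := by
        rw [edist_dist, dist_comm]
        exact ENNReal.ofReal_le_ofReal hz
      calc EMetric.infEdist y H ≤ ENNReal.ofReal (ε * r) + ENNReal.ofReal (βg * r) :=
            le_trans h1 (add_le_add hzA h2)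
        _ = ENNReal.ofReal (ε * r + βg * r) :=
            (ENNReal.ofReal_add (by positivity) (by positivity)).symm
        _ ≤ ENNReal.ofReal (b * (r / 2)) := by
            refine ENNReal.ofReal_le_ofReal ?_
            nlinarith
  -- make the step total so we can `choose`
  have key' : ∀ (n : ℕ) (hist : Fin (n+1) → EuclideanSpace ℝ (Fin d) × ℝ),
      ∃ p : EuclideanSpace ℝ (Fin d) × ℝ,
        (hist (Fin.last n)).1 ∈ K → 0 < (hist (Fin.last n)).2 → (hist (Fin.last n)).2 ≤ r₀ →
        p.1 ∈ K ∧ p.2 = βg * (hist (Fin.last n)).2 ∧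
          closedBall p.1 p.2 ⊆
            closedBall (hist (Fin.last n)).1 (hist (Fin.last n)).2 \ F n hist := by
    intro n hist
    by_cases hc : (hist (Fin.last n)).1 ∈ K ∧ 0 < (hist (Fin.last n)).2 ∧
        (hist (Fin.last n)).2 ≤ r₀
    · obtain ⟨p, hp⟩ := key n hist hc.1 hc.2.1 hc.2.2
      exact ⟨p, fun _ _ _ => hp⟩
    · exact ⟨(x₀, r₀), fun h1 h2 h3 => absurd ⟨h1, h2, h3⟩ hc⟩
  choose g hg using key'
  -- Bob's play
  let h : (n : ℕ) → Fin (n+1) → EuclideanSpace ℝ (Fin d) × ℝ := fun n =>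
    Nat.rec (fun _ => (x₀, r₀)) (fun m ih => Fin.snoc ih (g m ih)) n
  let B : ℕ → EuclideanSpace ℝ (Fin d) × ℝ := fun n => h n (Fin.last n)
  have hstep : ∀ n, B (n+1) = g n (h n) := by
    intro n
    have e : h (n+1) = Fin.snoc (h n) (g n (h n)) := rfl
    show h (n+1) (Fin.last (n+1)) = g n (h n)
    rw [e, Fin.snoc_last]
  have hcomp : ∀ n (i : Fin (n+1)), h n i = B i.val := by
    intro n
    induction n with
    | zero =>
      intro i
      have : (i : ℕ) = 0 := by omega
      rw [this]
      rfl
    | succ m ih =>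
      intro i
      refine Fin.lastCases ?_ ?_ i
      · rfl
      · intro j
        have e : h (m+1) = Fin.snoc (h m) (g m (h m)) := rfl
        show h (m+1) (Fin.castSucc j) = B (Fin.castSucc j).val
        rw [e, Fin.snoc_castSucc]
        exact ih j
  have hBe : ∀ n, (fun i : Fin (n+1) => B i.val) = h n :=
    fun n => funext fun i => (hcomp n i).symm
  -- invariants of the play
  have main : ∀ n, (B n).1 ∈ K ∧ (B n).2 = βg ^ n * r₀ := by
    intro n
    induction n with
    | zero =>
      refine ⟨hx₀, ?_⟩
      show r₀ = βg ^ 0 * r₀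
      simp
    | succ m ih =>
      obtain ⟨ihK, ihr⟩ := ih
      have hpow1 : βg ^ m ≤ 1 := pow_le_one₀ hβg0.le (by linarith)
      have hpow0 : 0 < βg ^ m := pow_pos hβg0 m
      have hr_pos : 0 < (B m).2 := by rw [ihr]; positivity
      have hr_le : (B m).2 ≤ r₀ := by rw [ihr]; nlinarith
      have hk := hg m (h m) ihK hr_pos hr_le
      rw [hstep m]
      refine ⟨hk.1, ?_⟩
      have : (g m (h m)).2 = βg * (B m).2 := hk.2.1
      rw [this, ihr, pow_succ]
      ring
  have hplay : ∀ n : ℕ, βg * (B n).2 ≤ (B (n+1)).2 ∧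
      closedBall (B (n+1)).1 (B (n+1)).2 ⊆
        closedBall (B n).1 (B n).2 \ F n (fun i => B i.val) := by
    intro n
    obtain ⟨hK', hr'⟩ := main n
    have hpow1 : βg ^ n ≤ 1 := pow_le_one₀ hβg0.le (by linarith)
    have hpow0 : 0 < βg ^ n := pow_pos hβg0 n
    have hr_pos : 0 < (B n).2 := by rw [hr']; positivity
    have hr_le : (B n).2 ≤ r₀ := by rw [hr']; nlinarith
    have hk := hg n (h n) hK' hr_pos hr_le
    rw [hstep n, hBe n]
    exact ⟨le_of_eq hk.2.1.symm, hk.2.2⟩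
  have h0 : 0 < (B 0).2 := hr₀
  obtain ⟨p, hpS, hpI⟩ := hF2 B h0 hplay
  -- the intersection point lies in K
  have hdist : ∀ n, dist ((B n).1) p ≤ βg ^ n * r₀ := by
    intro n
    have h1 : p ∈ closedBall (B n).1 (B n).2 := Set.mem_iInter.1 hpI n
    rw [mem_closedBall] at h1
    rw [dist_comm]
    calc dist p (B n).1 ≤ (B n).2 := h1
      _ = βg ^ n * r₀ := (main n).2
  have hlim0 : Filter.Tendsto (fun n => βg ^ n * r₀) Filter.atTop (nhds 0) := by
    have := (tendsto_pow_atTop_nhds_zero_of_lt_one hβg0.le (by linarith : βg < 1)).mul_const r₀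
    simpa using this
  have hlim : Filter.Tendsto (fun n => (B n).1) Filter.atTop (nhds p) := by
    rw [tendsto_iff_dist_tendsto_zero]
    exact squeeze_zero (fun n => dist_nonneg) hdist hlim0
  have hpK : p ∈ K :=
    hKcl.mem_of_tendsto hlim (Filter.Eventually.of_forall fun n => (main n).1)
  exact ⟨p, hpS, hpK⟩
end
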